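/- Let U be an open subset of a finite-dimensional real vector space E, g a smooth possibly degenerate metric on U, and D a Koszul derivative for g. Then the Riemann curvature tensor can be expressed in terms of the Koszul form as R(X,Y,Z,T) = X K(Y,Z,T) − Y K(X,Z,T) − K([X,Y],Z,T) + g(D_X Z, D_Y T) − g(D_Y Z, D_X T) for all smooth vector fields X, Y, Z, T; in particular, since g(D_X Z, D_Y T) and g(D_Y Z, D_X T) are determined by the Koszul form alone, R(X,Y,Z,T) is the same for every Koszul derivative D of g. -/

import Mathlib

variable {E : Type*} [NormedAddCommGroup E] [NormedSpace ℝ E] [FiniteDimensional ℝ E]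

/-- The action `(Xf)(p) = df_p(X(p))` of a vector field on a function. -/
noncomputable def vAct (X : E → E) (f : E → ℝ) : E → ℝ := fun p => fderiv ℝ f p (X p)

/-- The Lie bracket `[X,Y](p) = dY_p(X(p)) − dX_p(Y(p))` of vector fields. -/
noncomputable def vBracket (X Y : E → E) : E → E :=
  fun p => fderiv ℝ Y p (X p) - fderiv ℝ X p (Y p)

/-- The function `p ↦ g_p(Y(p), Z(p))`. -/
noncomputable def gFun (g : E → E →L[ℝ] E →L[ℝ] ℝ) (Y Z : E → E) : E → ℝ := fun p => g p (Y p) (Z p)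

/-- The Koszul form
`K(X,Y,Z) := ½{X g(Y,Z) + Y g(Z,X) − Z g(X,Y) − g(X,[Y,Z]) + g(Y,[Z,X]) + g(Z,[X,Y])}`. -/
noncomputable def koszul (g : E → E →L[ℝ] E →L[ℝ] ℝ) (X Y Z : E → E) : E → ℝ := fun p =>
  (1/2 : ℝ) * (vAct X (gFun g Y Z) p + vAct Y (gFun g Z X) p - vAct Z (gFun g X Y) p
    - gFun g X (vBracket Y Z) p + gFun g Y (vBracket Z X) p + gFun g Z (vBracket X Y) p)

/-- The Riemann curvature tensor of a Koszul derivative `D`: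
`R(X,Y,Z,T) := g(D_X D_Y Z − D_Y D_X Z − D_[X,Y] Z, T)`. -/
noncomputable def riem (g : E → E →L[ℝ] E →L[ℝ] ℝ) (D : (E → E) → (E → E) → (E → E))
    (X Y Z T : E → E) : E → ℝ := fun p =>
  g p (D X (D Y Z) p - D Y (D X Z) p - D (vBracket X Y) Z p) (T p)

/-!
Write `R(X,Y,Z,T) = g(D_X D_Y Z, T) - g(D_Y D_X Z, T) - g(D_{[X,Y]} Z, T)`. Since
`K(X,Y,Z) + K(X,Z,Y) = X g(Y,Z)`, a Koszul derivative is metric: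
`g(D_X W, T) = X g(W,T) - g(W, D_X T)`. Applied with `W = D_Y Z` and `W = D_X Z`, and using that
`g(D_Y Z, T) = K(Y,Z,T)` on the open set `U` (so their derivatives agree there), this gives the
formula. For independence of `D`: the Koszul formula pins down `g(D_X Z, W)` for every smooth `W`,
so by symmetry of `g` it pins down `g(D_X Z, D_Y T)` too.
-/

section KoszulDerivative

omit [FiniteDimensional ℝ E]

structure IsKoszulDerivative (U : Set E) (g : E → E →L[ℝ] E →L[ℝ] ℝ)
    (D : (E → E) → (E → E) → (E → E)) : Prop where
  contDiffOn : ∀ X Y : E → E, ContDiffOn ℝ (⊤ : ℕ∞) X U → ContDiffOn ℝ (⊤ : ℕ∞) Y U →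
    ContDiffOn ℝ (⊤ : ℕ∞) (D X Y) U
  koszul_formula : ∀ X Y Z : E → E, ContDiffOn ℝ (⊤ : ℕ∞) X U → ContDiffOn ℝ (⊤ : ℕ∞) Y U →
    ContDiffOn ℝ (⊤ : ℕ∞) Z U → ∀ p ∈ U, g p (D X Y p) (Z p) = koszul g X Y Z p

variable {U : Set E} {g : E → E →L[ℝ] E →L[ℝ] ℝ} {D D' : (E → E) → (E → E) → (E → E)}
  {X Y Z T W : E → E} {p : E}

lemma contDiffOn_vBracket (hU : IsOpen U) (hX : ContDiffOn ℝ (⊤ : ℕ∞) X U)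
    (hY : ContDiffOn ℝ (⊤ : ℕ∞) Y U) : ContDiffOn ℝ (⊤ : ℕ∞) (vBracket X Y) U :=
  ((hY.fderiv_of_isOpen hU (by simp)).clm_apply hX).sub
    ((hX.fderiv_of_isOpen hU (by simp)).clm_apply hY)

lemma vBracket_swap (X Y : E → E) : vBracket Y X = -vBracket X Y := by
  funext p
  simp [vBracket]

lemma vAct_congr_of_eqOn (hU : IsOpen U) {f f' : E → ℝ} (h : Set.EqOn f f' U) (X : E → E)
    (hp : p ∈ U) : vAct X f p = vAct X f' p := by
  simp only [vAct, (h.eventuallyEq_of_mem (hU.mem_nhds hp)).fderiv_eq]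

lemma koszul_add_koszul_swap (hsymm : ∀ p u v, g p u v = g p v u) (X Y Z : E → E) (p : E) :
    koszul g X Y Z p + koszul g X Z Y p = vAct X (gFun g Y Z) p := by
  have gFun_comm : ∀ V W : E → E, gFun g W V = gFun g V W := fun V W =>
    funext fun q => hsymm q _ _
  simp only [koszul, gFun_comm Y Z, gFun_comm X Y, gFun_comm Z X,
    vBracket_swap Y Z, vBracket_swap X Y, vBracket_swap Z X]
  simp only [gFun, Pi.neg_apply, map_neg]
  ring

namespace IsKoszulDerivative

lemma g_add_g_eq_vAct (hD : IsKoszulDerivative U g D) (hsymm : ∀ p u v, g p u v = g p v u)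
    (hX : ContDiffOn ℝ (⊤ : ℕ∞) X U) (hW : ContDiffOn ℝ (⊤ : ℕ∞) W U)
    (hT : ContDiffOn ℝ (⊤ : ℕ∞) T U) (hp : p ∈ U) :
    g p (D X W p) (T p) + g p (W p) (D X T p) = vAct X (gFun g W T) p := by
  rw [hD.koszul_formula X W T hX hW hT p hp, hsymm p (W p), hD.koszul_formula X T W hX hT hW p hp]
  exact koszul_add_koszul_swap hsymm X W T p

lemma vAct_gFun_eq_vAct_koszul (hD : IsKoszulDerivative U g D) (hU : IsOpen U)
    (hY : ContDiffOn ℝ (⊤ : ℕ∞) Y U) (hZ : ContDiffOn ℝ (⊤ : ℕ∞) Z U)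
    (hT : ContDiffOn ℝ (⊤ : ℕ∞) T U) (X : E → E) (hp : p ∈ U) :
    vAct X (gFun g (D Y Z) T) p = vAct X (koszul g Y Z T) p :=
  vAct_congr_of_eqOn hU (hD.koszul_formula Y Z T hY hZ hT) X hp

lemma riem_eq (hD : IsKoszulDerivative U g D) (hU : IsOpen U)
    (hsymm : ∀ p u v, g p u v = g p v u)
    (hX : ContDiffOn ℝ (⊤ : ℕ∞) X U) (hY : ContDiffOn ℝ (⊤ : ℕ∞) Y U)
    (hZ : ContDiffOn ℝ (⊤ : ℕ∞) Z U) (hT : ContDiffOn ℝ (⊤ : ℕ∞) T U) (hp : p ∈ U) :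
    riem g D X Y Z T p =
      vAct X (koszul g Y Z T) p - vAct Y (koszul g X Z T) p
        - koszul g (vBracket X Y) Z T p
        + g p (D X Z p) (D Y T p) - g p (D Y Z p) (D X T p) := by
  have hXYZ := hD.g_add_g_eq_vAct hsymm hX (hD.contDiffOn Y Z hY hZ) hT hp
  have hYXZ := hD.g_add_g_eq_vAct hsymm hY (hD.contDiffOn X Z hX hZ) hT hp
  rw [hD.vAct_gFun_eq_vAct_koszul hU hY hZ hT X hp] at hXYZ
  rw [hD.vAct_gFun_eq_vAct_koszul hU hX hZ hT Y hp] at hYXZ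
  have hBr := hD.koszul_formula _ Z T (contDiffOn_vBracket hU hX hY) hZ hT p hp
  simp only [riem, map_sub, sub_apply]
  linarith

lemma g_left_eq (hD : IsKoszulDerivative U g D) (hD' : IsKoszulDerivative U g D')
    (hX : ContDiffOn ℝ (⊤ : ℕ∞) X U) (hY : ContDiffOn ℝ (⊤ : ℕ∞) Y U)
    (hW : ContDiffOn ℝ (⊤ : ℕ∞) W U) (hp : p ∈ U) :
    g p (D X Y p) (W p) = g p (D' X Y p) (W p) := by
  rw [hD.koszul_formula X Y W hX hY hW p hp, hD'.koszul_formula X Y W hX hY hW p hp]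

lemma g_eq (hD : IsKoszulDerivative U g D) (hD' : IsKoszulDerivative U g D')
    (hsymm : ∀ p u v, g p u v = g p v u)
    (hX : ContDiffOn ℝ (⊤ : ℕ∞) X U) (hY : ContDiffOn ℝ (⊤ : ℕ∞) Y U)
    (hZ : ContDiffOn ℝ (⊤ : ℕ∞) Z U) (hT : ContDiffOn ℝ (⊤ : ℕ∞) T U) (hp : p ∈ U) :
    g p (D X Z p) (D Y T p) = g p (D' X Z p) (D' Y T p) :=
  calc g p (D X Z p) (D Y T p)
      = g p (D' X Z p) (D Y T p) := hD.g_left_eq hD' hX hZ (hD.contDiffOn Y T hY hT) hp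
    _ = g p (D Y T p) (D' X Z p) := hsymm _ _ _
    _ = g p (D' Y T p) (D' X Z p) := hD.g_left_eq hD' hY hT (hD'.contDiffOn X Z hX hZ) hp
    _ = g p (D' X Z p) (D' Y T p) := hsymm _ _ _

end IsKoszulDerivative

end KoszulDerivative

theorem riem_koszul_formula_general
    (U : Set E) (hU : IsOpen U)
    (g : E → E →L[ℝ] E →L[ℝ] ℝ)
    (hsymm : ∀ p : E, ∀ u v : E, g p u v = g p v u)
    (D : (E → E) → (E → E) → (E → E))
    (hDsmooth : ∀ X Y : E → E, ContDiffOn ℝ (⊤ : ℕ∞) X U → ContDiffOn ℝ (⊤ : ℕ∞) Y U →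
      ContDiffOn ℝ (⊤ : ℕ∞) (D X Y) U)
    (hDK : ∀ X Y Z : E → E, ContDiffOn ℝ (⊤ : ℕ∞) X U → ContDiffOn ℝ (⊤ : ℕ∞) Y U →
      ContDiffOn ℝ (⊤ : ℕ∞) Z U → ∀ p ∈ U, g p (D X Y p) (Z p) = koszul g X Y Z p)
    (X Y Z T : E → E) (hX : ContDiffOn ℝ (⊤ : ℕ∞) X U) (hY : ContDiffOn ℝ (⊤ : ℕ∞) Y U)
    (hZ : ContDiffOn ℝ (⊤ : ℕ∞) Z U) (hT : ContDiffOn ℝ (⊤ : ℕ∞) T U)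
    (D' : (E → E) → (E → E) → (E → E))
    (hD'smooth : ∀ X Y : E → E, ContDiffOn ℝ (⊤ : ℕ∞) X U → ContDiffOn ℝ (⊤ : ℕ∞) Y U →
      ContDiffOn ℝ (⊤ : ℕ∞) (D' X Y) U)
    (hD'K : ∀ X Y Z : E → E, ContDiffOn ℝ (⊤ : ℕ∞) X U → ContDiffOn ℝ (⊤ : ℕ∞) Y U →
      ContDiffOn ℝ (⊤ : ℕ∞) Z U → ∀ p ∈ U, g p (D' X Y p) (Z p) = koszul g X Y Z p) :
    ∀ p ∈ U,
      riem g D X Y Z T p =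
        vAct X (koszul g Y Z T) p - vAct Y (koszul g X Z T) p
          - koszul g (vBracket X Y) Z T p
          + g p (D X Z p) (D Y T p) - g p (D Y Z p) (D X T p) ∧
      riem g D X Y Z T p = riem g D' X Y Z T p := by
  intro p hp
  have hD : IsKoszulDerivative U g D := ⟨hDsmooth, hDK⟩
  have hD' : IsKoszulDerivative U g D' := ⟨hD'smooth, hD'K⟩
  refine ⟨hD.riem_eq hU hsymm hX hY hZ hT hp, ?_⟩
  rw [hD.riem_eq hU hsymm hX hY hZ hT hp, hD'.riem_eq hU hsymm hX hY hZ hT hp,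
    hD.g_eq hD' hsymm hX hY hZ hT hp, hD.g_eq hD' hsymm hY hX hZ hT hp]

/-- the Riemann curvature tensor is expressed via the Koszul form as
`R(X,Y,Z,T) = X K(Y,Z,T) − Y K(X,Z,T) − K([X,Y],Z,T) + g(D_X Z, D_Y T) − g(D_Y Z, D_X T)`,
and it is the same for every Koszul derivative `D'` of `g`. -/
theorem riem_koszul_formula
    (U : Set E) (hU : IsOpen U)
    (g : E → E →L[ℝ] E →L[ℝ] ℝ) (hg : ContDiffOn ℝ (⊤ : ℕ∞) g U)
    (hsymm : ∀ p : E, ∀ u v : E, g p u v = g p v u)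
    (D : (E → E) → (E → E) → (E → E))
    (hDsmooth : ∀ X Y : E → E, ContDiffOn ℝ (⊤ : ℕ∞) X U → ContDiffOn ℝ (⊤ : ℕ∞) Y U →
      ContDiffOn ℝ (⊤ : ℕ∞) (D X Y) U)
    (hDK : ∀ X Y Z : E → E, ContDiffOn ℝ (⊤ : ℕ∞) X U → ContDiffOn ℝ (⊤ : ℕ∞) Y U →
      ContDiffOn ℝ (⊤ : ℕ∞) Z U → ∀ p ∈ U, g p (D X Y p) (Z p) = koszul g X Y Z p)
    (X Y Z T : E → E) (hX : ContDiffOn ℝ (⊤ : ℕ∞) X U) (hY : ContDiffOn ℝ (⊤ : ℕ∞) Y U)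
    (hZ : ContDiffOn ℝ (⊤ : ℕ∞) Z U) (hT : ContDiffOn ℝ (⊤ : ℕ∞) T U)
    (D' : (E → E) → (E → E) → (E → E))
    (hD'smooth : ∀ X Y : E → E, ContDiffOn ℝ (⊤ : ℕ∞) X U → ContDiffOn ℝ (⊤ : ℕ∞) Y U →
      ContDiffOn ℝ (⊤ : ℕ∞) (D' X Y) U)
    (hD'K : ∀ X Y Z : E → E, ContDiffOn ℝ (⊤ : ℕ∞) X U → ContDiffOn ℝ (⊤ : ℕ∞) Y U →
      ContDiffOn ℝ (⊤ : ℕ∞) Z U → ∀ p ∈ U, g p (D' X Y p) (Z p) = koszul g X Y Z p) :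
    ∀ p ∈ U,
      riem g D X Y Z T p =
        vAct X (koszul g Y Z T) p - vAct Y (koszul g X Z T) p
          - koszul g (vBracket X Y) Z T p
          + g p (D X Z p) (D Y T p) - g p (D Y Z p) (D X T p) ∧
      riem g D X Y Z T p = riem g D' X Y Z T p :=
  riem_koszul_formula_general U hU g hsymm D hDsmooth hDK X Y Z T hX hY hZ hT D' hD'smooth hD'K
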